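/- arXiv:2403.01037 — 2 statements merged into one kernel-verified Lean document; each statement's English description precedes it below -/
import Mathlib

section
/- Let m, n ≥ 3 with m > 3 or n > 3. Then every boundary vertex of the grid graph P_m □ P_n has node resistance curvature at least 17/4830; in particular the node resistance curvature on the boundary is strictly positive. -/
open Classical Matrix

/-- The four Penrose conditions characterizing the Moore–Penrose pseudoinverse
of a real square matrix. -/
def IsMoorePenroseInverse {V : Type*} [Fintype V] [DecidableEq V]
    (L P : Matrix V V ℝ) : Prop :=
  L * P * L = L ∧ P * L * P = P ∧ (L * P)ᵀ = L * P ∧ (P * L)ᵀ = P * L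

/-- The Moore–Penrose pseudoinverse of a real square matrix. -/
noncomputable def pinv {V : Type*} [Fintype V] [DecidableEq V]
    (L : Matrix V V ℝ) : Matrix V V ℝ :=
  if h : ∃ P, IsMoorePenroseInverse L P then h.choose else 0

/-- Effective resistance between `x` and `y` computed from a (weighted) Laplacian `L`. -/
noncomputable def effResM {V : Type*} [Fintype V] [DecidableEq V]
    (L : Matrix V V ℝ) (x y : V) : ℝ :=
  pinv L x x + pinv L y y - 2 * pinv L x y

/-- Effective resistance between vertices `x` and `y` of a simple graph `G`. -/
noncomputable def effRes {V : Type*} [Fintype V] [DecidableEq V]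
    (G : SimpleGraph V) (x y : V) : ℝ :=
  effResM (G.lapMatrix ℝ) x y

/-- The node resistance curvature `p_x = 1 - (1/2) ∑_{y ~ x} ω_{x,y}`. -/
noncomputable def curv {V : Type*} [Fintype V] [DecidableEq V]
    (G : SimpleGraph V) (x : V) : ℝ :=
  1 - (1/2) * ∑ y : V, if G.Adj x y then effRes G x y else 0

/-- The grid graph `P_m □ P_n` (vertex `(i,j)` of the paper corresponds to
`(⟨i-1⟩, ⟨j-1⟩) : Fin m × Fin n`). -/
def grid (m n : ℕ) : SimpleGraph (Fin m × Fin n) :=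
  (SimpleGraph.pathGraph m).boxProd (SimpleGraph.pathGraph n)

/-!
Thomson's principle bounds `ω_{x,y}` by the energy of any unit flow from `x` to `y`: for the
potential `f = L⁺ (e_x - e_y)` one has `f x - f y = ω_{x,y} = fᵀ L f`, and pairing `f` with a unit
flow `θ` plus Cauchy–Schwarz gives `ω² ≤ E(θ) ω`. A flow on a subgraph keeps its energy when
transported into the grid, so each edge at the boundary of `P_m □ P_n` is bounded by the energy of
the unit current on a small grid (`3×2`, `3×3`, `4×3` or `3×4`) placed around it. Summing these
bounds over the two or three neighbours of a boundary vertex gives the claim; the worst case,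
`17/4830`, is the middle vertex of a short side of `P_3 □ P_n`. Reflections and the transposition of
the grid move every boundary vertex to the bottom row, within the left half.
-/

namespace IsMoorePenroseInverse

variable {V W : Type*} [Fintype V] [DecidableEq V] [Fintype W] [DecidableEq W]
  {L P Q : Matrix V V ℝ}

theorem unique (hP : IsMoorePenroseInverse L P) (hQ : IsMoorePenroseInverse L Q) : P = Q := by
  obtain ⟨hP₁, hP₂, hP₃, hP₄⟩ := hP
  obtain ⟨hQ₁, hQ₂, hQ₃, hQ₄⟩ := hQ
  have hLP : L * P = L * Q :=
    calc L * P = (L * Q * L * P)ᵀ := by rw [hQ₁, hP₃]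
      _ = (L * P)ᵀ * (L * Q)ᵀ := by rw [← transpose_mul, Matrix.mul_assoc (L * Q)]
      _ = L * Q := by rw [hP₃, hQ₃, ← Matrix.mul_assoc, hP₁]
  have hPL : P * L = Q * L :=
    calc P * L = (P * (L * Q * L))ᵀ := by rw [hQ₁, hP₄]
      _ = (Q * L)ᵀ * (P * L)ᵀ := by rw [← transpose_mul, Matrix.mul_assoc, Matrix.mul_assoc]
      _ = Q * L := by rw [hP₄, hQ₄, Matrix.mul_assoc, ← Matrix.mul_assoc L, hP₁]
  calc P = P * L * P := hP₂.symm
    _ = Q * L * Q := by rw [Matrix.mul_assoc, hLP, ← Matrix.mul_assoc, hPL]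
    _ = Q := hQ₂

theorem transpose (hL : Lᵀ = L) (hP : IsMoorePenroseInverse L P) :
    IsMoorePenroseInverse L Pᵀ := by
  obtain ⟨h₁, h₂, h₃, h₄⟩ := hP
  refine ⟨?_, ?_, ?_, ?_⟩
  · simpa [transpose_mul, hL, Matrix.mul_assoc] using congrArg Matrix.transpose h₁
  · simpa [transpose_mul, hL, Matrix.mul_assoc] using congrArg Matrix.transpose h₂
  · rw [← hL, ← transpose_mul, transpose_transpose, h₄]
  · rw [← hL, ← transpose_mul, transpose_transpose, h₃]

theorem submatrix (σ : W ≃ V) (hP : IsMoorePenroseInverse L P) :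
    IsMoorePenroseInverse (L.submatrix σ σ) (P.submatrix σ σ) := by
  obtain ⟨h₁, h₂, h₃, h₄⟩ := hP
  refine ⟨?_, ?_, ?_, ?_⟩ <;>
    simp only [submatrix_mul_equiv, transpose_submatrix, h₁, h₂, h₃, h₄]

end IsMoorePenroseInverse

section Pinv

variable {V W : Type*} [Fintype V] [DecidableEq V] [Fintype W] [DecidableEq W]
  {L : Matrix V V ℝ}

theorem isMoorePenroseInverse_pinv (h : ∃ P, IsMoorePenroseInverse L P) :
    IsMoorePenroseInverse L (pinv L) := by
  rw [pinv, dif_pos h]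
  exact h.choose_spec

theorem pinv_mul_mul_pinv (L : Matrix V V ℝ) : pinv L * L * pinv L = pinv L := by
  by_cases h : ∃ P, IsMoorePenroseInverse L P
  · exact (isMoorePenroseInverse_pinv h).2.1
  · simp [pinv, dif_neg h]

theorem pinv_transpose (hL : Lᵀ = L) : (pinv L)ᵀ = pinv L := by
  by_cases h : ∃ P, IsMoorePenroseInverse L P
  · exact ((isMoorePenroseInverse_pinv h).transpose hL).unique (isMoorePenroseInverse_pinv h)
  · simp [pinv, dif_neg h]

theorem pinv_submatrix (L : Matrix V V ℝ) (σ : W ≃ V) :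
    pinv (L.submatrix σ σ) = (pinv L).submatrix σ σ := by
  by_cases h : ∃ P, IsMoorePenroseInverse L P
  · have hσ := (isMoorePenroseInverse_pinv h).submatrix σ
    exact (isMoorePenroseInverse_pinv ⟨_, hσ⟩).unique hσ
  · have h' : ¬ ∃ Q, IsMoorePenroseInverse (L.submatrix σ σ) Q := by
      rintro ⟨Q, hQ⟩
      refine h ⟨Q.submatrix σ.symm σ.symm, ?_⟩
      simpa [submatrix_submatrix] using hQ.submatrix σ.symm
    ext
    simp [pinv, dif_neg h, dif_neg h']

end Pinv

section Flow

open Finset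

variable {V : Type*} [Fintype V]

noncomputable def flowEnergy (θ : V → V → ℝ) : ℝ := (1 / 2) * ∑ u, ∑ v, θ u v ^ 2

theorem flowEnergy_nonneg (θ : V → V → ℝ) : 0 ≤ flowEnergy θ := by
  unfold flowEnergy
  positivity

variable [DecidableEq V]

structure IsUnitFlow (G : SimpleGraph V) (x y : V) (θ : V → V → ℝ) : Prop where
  antisymm : ∀ u v, θ u v = -θ v u
  eq_zero_of_not_adj : ∀ u v, ¬ G.Adj u v → θ u v = 0
  sum_eq : ∀ u, ∑ v, θ u v = (if u = x then 1 else 0) - if u = y then 1 else 0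

namespace IsUnitFlow

variable {G : SimpleGraph V} {x y : V} {θ : V → V → ℝ}

theorem sum_mul_sub (hθ : IsUnitFlow G x y θ) (f : V → ℝ) :
    ∑ u, ∑ v, θ u v * (f u - f v) = 2 * (f x - f y) := by
  have hout : ∑ u, (∑ v, θ u v) * f u = f x - f y := by
    simp [hθ.sum_eq, sub_mul, sum_sub_distrib]
  have hin : ∑ u, ∑ v, θ u v * f v = -(f x - f y) := by
    rw [sum_comm, ← hout, ← sum_neg_distrib]
    refine sum_congr rfl fun v _ => ?_
    simp [hθ.antisymm _ v, ← sum_mul, sum_neg_distrib]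
  simp only [mul_sub, sum_sub_distrib, mul_comm _ (f _), ← mul_sum] at hout hin ⊢
  linarith

theorem sq_sub_le (hθ : IsUnitFlow G x y θ) (f : V → ℝ) :
    (f x - f y) ^ 2 ≤ flowEnergy θ * (f ⬝ᵥ G.lapMatrix ℝ *ᵥ f) := by
  set g : V × V → ℝ := fun p => if G.Adj p.1 p.2 then f p.1 - f p.2 else 0
  have hpair : ∑ p : V × V, θ p.1 p.2 * g p = 2 * (f x - f y) := by
    rw [← hθ.sum_mul_sub f, Fintype.sum_prod_type]
    refine sum_congr rfl fun u _ => sum_congr rfl fun v _ => ?_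
    by_cases h : G.Adj u v
    · simp [g, h]
    · simp [g, h, hθ.eq_zero_of_not_adj u v h]
  have hdirichlet : ∑ p : V × V, g p ^ 2 = 2 * (f ⬝ᵥ G.lapMatrix ℝ *ᵥ f) := by
    rw [← toLinearMap₂'_apply', SimpleGraph.lapMatrix_toLinearMap₂', Fintype.sum_prod_type]
    simp [g, apply_ite (· ^ 2)]
    ring
  have hcs := sum_mul_sq_le_sq_mul_sq univ (fun p : V × V => θ p.1 p.2) g
  rw [hpair, hdirichlet, Fintype.sum_prod_type] at hcs
  unfold flowEnergy
  nlinarith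

end IsUnitFlow

/-- Thomson's principle. -/
theorem effRes_le_flowEnergy {G : SimpleGraph V} {x y : V} {θ : V → V → ℝ}
    (hθ : IsUnitFlow G x y θ) : effRes G x y ≤ flowEnergy θ := by
  set L := G.lapMatrix ℝ
  set P := pinv L
  have hP : Pᵀ = P := pinv_transpose (G.isSymm_lapMatrix (R := ℝ))
  set b : V → ℝ := Pi.single x 1 - Pi.single y 1
  set f := P *ᵥ b with hf
  have hdrop : b ⬝ᵥ f = f x - f y := by simp [b, sub_dotProduct]
  have hres : effRes G x y = f x - f y := by
    have hPyx : P y x = P x y := congrFun₂ hP x y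
    have hfu : ∀ u, f u = P u x - P u y := fun u => by simp [f, b, mulVec_sub]
    rw [effRes, effResM, hfu, hfu, hPyx]
    ring
  have hquad : f ⬝ᵥ L *ᵥ f = f x - f y := by
    have hbP : P *ᵥ b = b ᵥ* P := by rw [← vecMul_transpose, hP]
    rw [← hdrop, hf]
    nth_rewrite 1 [hbP]
    rw [← dotProduct_mulVec, mulVec_mulVec, mulVec_mulVec, pinv_mul_mul_pinv]
  have hnonneg : 0 ≤ f ⬝ᵥ L *ᵥ f := (G.posSemidef_lapMatrix ℝ).dotProduct_mulVec_nonneg f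
  have hsq := hθ.sq_sub_le f
  rw [hquad] at hsq hnonneg
  rw [hres]
  nlinarith [flowEnergy_nonneg θ]

end Flow

section Map

open Finset Function

variable {A V : Type*}

noncomputable def flowMap (φ : A → V) (θ : A → A → ℝ) : V → V → ℝ :=
  extend φ (fun a => extend φ (θ a) 0) 0

variable {φ : A → V} {θ : A → A → ℝ}

theorem flowMap_apply (hφ : Injective φ) (a : A) : flowMap φ θ (φ a) = extend φ (θ a) 0 :=
  hφ.extend_apply _ _ a

theorem flowMap_apply_apply (hφ : Injective φ) (a b : A) : flowMap φ θ (φ a) (φ b) = θ a b := by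
  rw [flowMap_apply hφ, hφ.extend_apply]

theorem flowMap_of_notMem_range {u : V} (hu : u ∉ Set.range φ) : flowMap φ θ u = 0 :=
  extend_apply' _ _ _ (by simpa using hu)

theorem flowMap_apply_of_notMem_range (hφ : Injective φ) {u v : V} (hv : v ∉ Set.range φ) :
    flowMap φ θ u v = 0 := by
  by_cases hu : u ∈ Set.range φ
  · obtain ⟨a, rfl⟩ := hu
    rw [flowMap_apply hφ, extend_apply' _ _ _ (by simpa using hv), Pi.zero_apply]
  · rw [flowMap_of_notMem_range hu, Pi.zero_apply]

variable [Fintype A] [Fintype V]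

theorem sum_apply_extend_zero {β : Type*} [Zero β] (hφ : Injective φ) (g : A → β)
    {F : β → ℝ} (hF : F 0 = 0) : ∑ v, F (extend φ g 0 v) = ∑ a, F (g a) := by
  refine (Fintype.sum_of_injective φ hφ _ _ (fun v hv => ?_) fun a => ?_).symm
  · rw [extend_apply' _ _ _ (by simpa using hv), Pi.zero_apply, hF]
  · rw [hφ.extend_apply]

theorem flowEnergy_flowMap (hφ : Injective φ) : flowEnergy (flowMap φ θ) = flowEnergy θ := by
  unfold flowEnergy
  congr 1
  rw [flowMap, sum_apply_extend_zero hφ _ (F := fun r : V → ℝ => ∑ v, r v ^ 2) (by simp)]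
  exact sum_congr rfl fun a _ =>
    sum_apply_extend_zero hφ (θ a) (F := fun r : ℝ => r ^ 2) (by simp)

variable [DecidableEq A] [DecidableEq V]

theorem IsUnitFlow.map {G : SimpleGraph A} {H : SimpleGraph V} (φ : G ↪g H) {x y : A}
    (hθ : IsUnitFlow G x y θ) : IsUnitFlow H (φ x) (φ y) (flowMap φ θ) where
  antisymm u v := by
    by_cases hu : u ∈ Set.range φ
    · by_cases hv : v ∈ Set.range φ
      · obtain ⟨a, rfl⟩ := hu
        obtain ⟨b, rfl⟩ := hv
        rw [flowMap_apply_apply φ.injective, flowMap_apply_apply φ.injective, hθ.antisymm]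
      · rw [flowMap_apply_of_notMem_range φ.injective hv, flowMap_of_notMem_range hv,
          Pi.zero_apply, neg_zero]
    · rw [flowMap_of_notMem_range hu, flowMap_apply_of_notMem_range φ.injective hu,
        Pi.zero_apply, neg_zero]
  eq_zero_of_not_adj u v huv := by
    by_cases hu : u ∈ Set.range φ
    · by_cases hv : v ∈ Set.range φ
      · obtain ⟨a, rfl⟩ := hu
        obtain ⟨b, rfl⟩ := hv
        rw [flowMap_apply_apply φ.injective]
        exact hθ.eq_zero_of_not_adj a b (by rwa [φ.map_adj_iff] at huv)
      · exact flowMap_apply_of_notMem_range φ.injective hv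
    · rw [flowMap_of_notMem_range hu, Pi.zero_apply]
  sum_eq u := by
    by_cases hu : u ∈ Set.range φ
    · obtain ⟨a, rfl⟩ := hu
      rw [flowMap_apply φ.injective]
      simpa [hθ.sum_eq, φ.injective.eq_iff] using
        sum_apply_extend_zero φ.injective (θ a) (F := id) rfl
    · have hx : u ≠ φ x := fun h => hu ⟨x, h.symm⟩
      have hy : u ≠ φ y := fun h => hu ⟨y, h.symm⟩
      simp [flowMap_of_notMem_range hu, hx, hy]

theorem effRes_map_le {G : SimpleGraph A} {H : SimpleGraph V} (φ : G ↪g H) {x y : A}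
    (hθ : IsUnitFlow G x y θ) : effRes H (φ x) (φ y) ≤ flowEnergy θ :=
  flowEnergy_flowMap (θ := θ) φ.injective ▸ effRes_le_flowEnergy (hθ.map φ)

end Map

section Potential

variable {V : Type*} [Fintype V] [DecidableEq V]

noncomputable def potentialFlow (G : SimpleGraph V) (f : V → ℝ) (u v : V) : ℝ :=
  if G.Adj u v then f u - f v else 0

theorem isUnitFlow_potentialFlow {G : SimpleGraph V} {x y : V} {f : V → ℝ}
    (h : ∀ u, ∑ v, potentialFlow G f u v = (if u = x then 1 else 0) - if u = y then 1 else 0) :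
    IsUnitFlow G x y (potentialFlow G f) where
  antisymm u v := by
    by_cases huv : G.Adj u v
    · simp [potentialFlow, huv, huv.symm]
    · have hvu : ¬ G.Adj v u := fun h => huv h.symm
      simp [potentialFlow, huv, hvu]
  eq_zero_of_not_adj u v huv := if_neg huv
  sum_eq := h

end Potential

section Resistance

variable {V W : Type*} [Fintype V] [DecidableEq V] [Fintype W] [DecidableEq W]
  {G : SimpleGraph V} {H : SimpleGraph W}

theorem lapMatrix_eq_submatrix_of_iso (e : G ≃g H) :
    H.lapMatrix ℝ = (G.lapMatrix ℝ).submatrix e.symm.toEquiv e.symm.toEquiv := by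
  ext u w
  have hdeg : H.degree u = G.degree (e.symm u) := by
    rw [← SimpleGraph.card_neighborSet_eq_degree, ← SimpleGraph.card_neighborSet_eq_degree]
    exact Fintype.card_congr (e.symm.mapNeighborSet u)
  have hadj : H.Adj u w ↔ G.Adj (e.symm u) (e.symm w) := e.symm.map_adj_iff.symm
  simp only [SimpleGraph.lapMatrix, Matrix.sub_apply, submatrix_apply, SimpleGraph.degMatrix,
    SimpleGraph.adjMatrix_apply, diagonal_apply, RelIso.coe_fn_toEquiv, e.symm.injective.eq_iff,
    hdeg, hadj]

theorem effRes_iso (e : G ≃g H) (x y : V) : effRes H (e x) (e y) = effRes G x y := by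
  rw [effRes, effRes, effResM, effResM, lapMatrix_eq_submatrix_of_iso e, pinv_submatrix]
  simp

theorem curv_iso (e : G ≃g H) (v : V) : curv H (e v) = curv G v := by
  rw [curv, curv, ← Fintype.sum_equiv e.toEquiv (fun y => if G.Adj v y then effRes G v y else 0)]
  intro y
  simp [e.map_adj_iff, effRes_iso]

theorem effRes_comm (G : SimpleGraph V) (x y : V) :
    effRes G x y = effRes G y x := by
  have hP := pinv_transpose (G.isSymm_lapMatrix (R := ℝ))
  rw [effRes, effRes, effResM, effResM, ← congrFun₂ hP x y, transpose_apply]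
  ring

theorem curv_eq_of_adj_iff {v : V} {s : Finset V} (hs : ∀ y, G.Adj v y ↔ y ∈ s) :
    curv G v = 1 - (1 / 2) * ∑ y ∈ s, effRes G v y := by
  rw [curv, ← Finset.sum_filter]
  congr 3
  ext y
  simp [hs]

end Resistance

namespace SimpleGraph

def pathGraphRev (n : ℕ) : pathGraph n ≃g pathGraph n where
  toEquiv := Fin.revPerm
  map_rel_iff' := by
    intro i j
    simp only [Fin.revPerm_apply, pathGraph_adj, Fin.val_rev]
    omega

def pathGraphShift {p n : ℕ} (a : ℕ) (h : a + p ≤ n) : pathGraph p ↪g pathGraph n where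
  toFun i := ⟨a + i, by omega⟩
  inj' i j hij := by simpa [Fin.ext_iff] using hij
  map_rel_iff' {i j} := by
    change (pathGraph n).Adj ⟨a + i, _⟩ ⟨a + j, _⟩ ↔ _
    simp only [pathGraph_adj]
    omega

variable {α α' β β' : Type*} {G : SimpleGraph α} {G' : SimpleGraph α'} {H : SimpleGraph β}
  {H' : SimpleGraph β'}

def Iso.boxProdCongr (e₁ : G ≃g G') (e₂ : H ≃g H') : G.boxProd H ≃g G'.boxProd H' where
  toEquiv := e₁.toEquiv.prodCongr e₂.toEquiv
  map_rel_iff' := by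
    intro u v
    simp [boxProd_adj, e₁.map_adj_iff, e₂.map_adj_iff, e₁.injective.eq_iff,
      e₂.injective.eq_iff]

def Embedding.boxProdMap (f₁ : G ↪g G') (f₂ : H ↪g H') : G.boxProd H ↪g G'.boxProd H' where
  toEmbedding := f₁.toEmbedding.prodMap f₂.toEmbedding
  map_rel_iff' := by
    intro u v
    simp [boxProd_adj, f₁.map_adj_iff, f₂.map_adj_iff, f₁.injective.eq_iff,
      f₂.injective.eq_iff]

end SimpleGraph

section GridMaps

open SimpleGraph

variable {m n : ℕ}

def gridShift {p q : ℕ} (a b : ℕ) (ha : a + p ≤ m) (hb : b + q ≤ n) : grid p q ↪g grid m n :=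
  Embedding.boxProdMap (pathGraphShift a ha) (pathGraphShift b hb)

@[simp]
theorem gridShift_apply {p q : ℕ} (a b : ℕ) (ha : a + p ≤ m) (hb : b + q ≤ n)
    (z : Fin p × Fin q) :
    gridShift a b ha hb z = (⟨a + z.1, by omega⟩, ⟨b + z.2, by omega⟩) :=
  rfl

def gridTranspose (m n : ℕ) : grid m n ≃g grid n m := boxProdComm _ _

def gridRevFst (m n : ℕ) : grid m n ≃g grid m n := Iso.boxProdCongr (pathGraphRev m) Iso.refl

def gridRevSnd (m n : ℕ) : grid m n ≃g grid m n := Iso.boxProdCongr Iso.refl (pathGraphRev n)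

theorem grid_adj {u v : Fin m × Fin n} :
    (grid m n).Adj u v ↔
      (u.1.val + 1 = v.1.val ∨ v.1.val + 1 = u.1.val) ∧ u.2 = v.2 ∨
        (u.2.val + 1 = v.2.val ∨ v.2.val + 1 = u.2.val) ∧ u.1 = v.1 := by
  simp [grid, SimpleGraph.boxProd_adj, SimpleGraph.pathGraph_adj]

end GridMaps

section Templates

/- Each table is the voltage of a unit current between the two marked vertices of a small grid,
obtained by solving Kirchhoff's equations; its energy is that grid's effective resistance. -/

variable {V : Type*} [Fintype V] [DecidableEq V] {H : SimpleGraph V}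

noncomputable def rungVoltage32 (p : Fin 3 × Fin 2) : ℝ := !![1, 0; 2, -1; 1, 0] p.1 p.2 / 5

theorem effRes_rung_le_of_grid32_embedding (φ : grid 3 2 ↪g H) :
    effRes H (φ (1, 0)) (φ (1, 1)) ≤ 3 / 5 := by
  refine (effRes_map_le φ (isUnitFlow_potentialFlow (f := rungVoltage32) fun u => ?_)).trans_eq ?_
  · fin_cases u <;>
    · simp only [Fintype.sum_prod_type, Fin.sum_univ_succ, Finset.univ_unique,
        Finset.sum_singleton, potentialFlow, rungVoltage32]
      norm_num [grid_adj, Fin.ext_iff, Prod.ext_iff, cons_val_two, vecHead, vecTail]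
  · simp only [flowEnergy, Fintype.sum_prod_type, Fin.sum_univ_succ, Finset.univ_unique,
      Finset.sum_singleton, potentialFlow, rungVoltage32]
    norm_num [grid_adj, Fin.ext_iff, Prod.ext_iff, cons_val_two, vecHead, vecTail]

noncomputable def sideVoltage43 (p : Fin 4 × Fin 3) : ℝ :=
  !![56, 41, 33; 71, 34, 25; -38, -1, 8; -23, -8, 0] p.1 p.2 / 161

theorem effRes_side_le_of_grid43_embedding (φ : grid 4 3 ↪g H) :
    effRes H (φ (1, 0)) (φ (2, 0)) ≤ 109 / 161 := by
  refine (effRes_map_le φ (isUnitFlow_potentialFlow (f := sideVoltage43) fun u => ?_)).trans_eq ?_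
  · fin_cases u <;>
    · simp only [Fintype.sum_prod_type, Fin.sum_univ_succ, Finset.univ_unique,
        Finset.sum_singleton, potentialFlow, sideVoltage43]
      norm_num [grid_adj, Fin.ext_iff, Prod.ext_iff, cons_val_two, vecHead, vecTail]
  · simp only [flowEnergy, Fintype.sum_prod_type, Fin.sum_univ_succ, Finset.univ_unique,
      Finset.sum_singleton, potentialFlow, sideVoltage43]
    norm_num [grid_adj, Fin.ext_iff, Prod.ext_iff, cons_val_two, vecHead, vecTail]

noncomputable def cornerVoltage33 (p : Fin 3 × Fin 3) : ℝ :=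
  !![12, 5, 3; -5, 0, 1; -3, -1, 0] p.1 p.2 / 24

theorem effRes_corner_le_of_grid33_embedding (φ : grid 3 3 ↪g H) :
    effRes H (φ (0, 0)) (φ (1, 0)) ≤ 17 / 24 := by
  refine (effRes_map_le φ (isUnitFlow_potentialFlow (f := cornerVoltage33) fun u => ?_)).trans_eq ?_
  · fin_cases u <;>
    · simp only [Fintype.sum_prod_type, Fin.sum_univ_succ, Finset.univ_unique,
        Finset.sum_singleton, potentialFlow, cornerVoltage33]
      norm_num [grid_adj, Fin.ext_iff, Prod.ext_iff, cons_val_two, vecHead, vecTail]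
  · simp only [flowEnergy, Fintype.sum_prod_type, Fin.sum_univ_succ, Finset.univ_unique,
      Finset.sum_singleton, potentialFlow, cornerVoltage33]
    norm_num [grid_adj, Fin.ext_iff, Prod.ext_iff, cons_val_two, vecHead, vecTail]

noncomputable def rungVoltage34 (p : Fin 3 × Fin 4) : ℝ :=
  !![30, 6, 1, 0; 54, -13, -3, -1; 30, 6, 1, 0] p.1 p.2 / 115

theorem effRes_rung_le_of_grid34_embedding (φ : grid 3 4 ↪g H) :
    effRes H (φ (1, 0)) (φ (1, 1)) ≤ 67 / 115 := by
  refine (effRes_map_le φ (isUnitFlow_potentialFlow (f := rungVoltage34) fun u => ?_)).trans_eq ?_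
  · fin_cases u <;>
    · simp only [Fintype.sum_prod_type, Fin.sum_univ_succ, Finset.univ_unique,
        Finset.sum_singleton, potentialFlow, rungVoltage34]
      norm_num [grid_adj, Fin.ext_iff, Prod.ext_iff, cons_val_two, vecHead, vecTail]
  · simp only [flowEnergy, Fintype.sum_prod_type, Fin.sum_univ_succ, Finset.univ_unique,
      Finset.sum_singleton, potentialFlow, rungVoltage34]
    norm_num [grid_adj, Fin.ext_iff, Prod.ext_iff, cons_val_two, vecHead, vecTail]

noncomputable def cornerVoltage34 (p : Fin 3 × Fin 4) : ℝ :=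
  !![1120, 408, 183, 115; -583, -79, 26, 47; -375, -167, -47, 0] p.1 p.2 / 2415

theorem effRes_corner_le_of_grid34_embedding (φ : grid 3 4 ↪g H) :
    effRes H (φ (0, 0)) (φ (1, 0)) ≤ 1703 / 2415 := by
  refine (effRes_map_le φ (isUnitFlow_potentialFlow (f := cornerVoltage34) fun u => ?_)).trans_eq ?_
  · fin_cases u <;>
    · simp only [Fintype.sum_prod_type, Fin.sum_univ_succ, Finset.univ_unique,
        Finset.sum_singleton, potentialFlow, cornerVoltage34]
      norm_num [grid_adj, Fin.ext_iff, Prod.ext_iff, cons_val_two, vecHead, vecTail]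
  · simp only [flowEnergy, Fintype.sum_prod_type, Fin.sum_univ_succ, Finset.univ_unique,
      Finset.sum_singleton, potentialFlow, cornerVoltage34]
    norm_num [grid_adj, Fin.ext_iff, Prod.ext_iff, cons_val_two, vecHead, vecTail]

end Templates

section GridCurvature

variable {m n : ℕ}

theorem effRes_grid_rung_le (k : ℕ) (hk : k + 3 ≤ m) (hn : 2 ≤ n) :
    effRes (grid m n) (⟨k + 1, by omega⟩, ⟨0, by omega⟩) (⟨k + 1, by omega⟩, ⟨1, by omega⟩) ≤
      3 / 5 := by
  simpa using effRes_rung_le_of_grid32_embedding (gridShift k 0 hk hn)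

theorem effRes_grid_side_le (k : ℕ) (hk : k + 4 ≤ m) (hn : 3 ≤ n) :
    effRes (grid m n) (⟨k + 1, by omega⟩, ⟨0, by omega⟩) (⟨k + 2, by omega⟩, ⟨0, by omega⟩) ≤
      109 / 161 := by
  simpa using effRes_side_le_of_grid43_embedding (gridShift k 0 hk hn)

theorem effRes_grid_corner_le (hm : 3 ≤ m) (hn : 3 ≤ n) :
    effRes (grid m n) (⟨0, by omega⟩, ⟨0, by omega⟩) (⟨1, by omega⟩, ⟨0, by omega⟩) ≤
      17 / 24 := by
  simpa using effRes_corner_le_of_grid33_embedding (gridShift 0 0 hm hn)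

theorem effRes_grid_three_rung_le (hn : 4 ≤ n) :
    effRes (grid 3 n) (⟨1, by omega⟩, ⟨0, by omega⟩) (⟨1, by omega⟩, ⟨1, by omega⟩) ≤
      67 / 115 := by
  simpa using effRes_rung_le_of_grid34_embedding (gridShift 0 0 le_rfl hn)

theorem effRes_grid_three_corner_le (hn : 4 ≤ n) :
    effRes (grid 3 n) (⟨0, by omega⟩, ⟨0, by omega⟩) (⟨1, by omega⟩, ⟨0, by omega⟩) ≤
      1703 / 2415 := by
  simpa using effRes_corner_le_of_grid34_embedding (gridShift 0 0 le_rfl hn)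

theorem curv_grid_zero_zero_eq (hm : 2 ≤ m) (hn : 2 ≤ n) :
    curv (grid m n) (⟨0, by omega⟩, ⟨0, by omega⟩) =
      1 - (1 / 2) *
        (effRes (grid m n) (⟨0, by omega⟩, ⟨0, by omega⟩) (⟨1, by omega⟩, ⟨0, by omega⟩) +
          effRes (grid m n) (⟨0, by omega⟩, ⟨0, by omega⟩) (⟨0, by omega⟩, ⟨1, by omega⟩)) := by
  rw [curv_eq_of_adj_iff (s := {(⟨1, by omega⟩, ⟨0, by omega⟩), (⟨0, by omega⟩, ⟨1, by omega⟩)}),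
    Finset.sum_pair (by simp [Prod.ext_iff])]
  rintro ⟨⟨a, ha⟩, ⟨b, hb⟩⟩
  simp [grid_adj, Prod.ext_iff]
  omega

theorem curv_grid_succ_zero_eq (k : ℕ) (hk : k + 3 ≤ m) (hn : 2 ≤ n) :
    curv (grid m n) (⟨k + 1, by omega⟩, ⟨0, by omega⟩) =
      1 - (1 / 2) *
        (effRes (grid m n) (⟨k + 1, by omega⟩, ⟨0, by omega⟩) (⟨k, by omega⟩, ⟨0, by omega⟩) +
          effRes (grid m n) (⟨k + 1, by omega⟩, ⟨0, by omega⟩) (⟨k + 2, by omega⟩, ⟨0, by omega⟩) +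
          effRes (grid m n) (⟨k + 1, by omega⟩, ⟨0, by omega⟩)
            (⟨k + 1, by omega⟩, ⟨1, by omega⟩)) := by
  rw [curv_eq_of_adj_iff (s := {(⟨k, by omega⟩, ⟨0, by omega⟩), (⟨k + 2, by omega⟩, ⟨0, by omega⟩),
      (⟨k + 1, by omega⟩, ⟨1, by omega⟩)}),
    Finset.sum_insert (by simp [Prod.ext_iff]), Finset.sum_pair (by simp [Prod.ext_iff]), add_assoc]
  rintro ⟨⟨a, ha⟩, ⟨b, hb⟩⟩
  simp [grid_adj, Prod.ext_iff]
  omega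

theorem le_curv_grid_corner (hm : 3 ≤ m) (hn : 3 ≤ n) :
    7 / 24 ≤ curv (grid m n) (⟨0, by omega⟩, ⟨0, by omega⟩) := by
  have h₁ := effRes_grid_corner_le hm hn
  have h₂ : effRes (grid m n) (⟨0, by omega⟩, ⟨0, by omega⟩) (⟨0, by omega⟩, ⟨1, by omega⟩) ≤
      17 / 24 :=
    (effRes_iso (gridTranspose n m) (⟨0, by omega⟩, ⟨0, by omega⟩)
      (⟨1, by omega⟩, ⟨0, by omega⟩)).trans_le (effRes_grid_corner_le hn hm)
  rw [curv_grid_zero_zero_eq (by omega) (by omega)]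
  linarith

theorem le_curv_grid_one_zero (hm : 4 ≤ m) (hn : 3 ≤ n) :
    283 / 38640 ≤ curv (grid m n) (⟨1, by omega⟩, ⟨0, by omega⟩) := by
  have h₁ := effRes_comm (grid m n) _ _ ▸ effRes_grid_corner_le (m := m) (by omega) hn
  have h₂ := effRes_grid_side_le 0 hm hn
  have h₃ := effRes_grid_rung_le (m := m) (n := n) 0 (by omega) (by omega)
  rw [curv_grid_succ_zero_eq 0 (by omega) (by omega)]
  linarith

theorem le_curv_grid_three_one_zero (hn : 4 ≤ n) :
    17 / 4830 ≤ curv (grid 3 n) (⟨1, by omega⟩, ⟨0, by omega⟩) := by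
  have h₁ := effRes_comm (grid 3 n) _ _ ▸ effRes_grid_three_corner_le hn
  have h₂ : effRes (grid 3 n) (⟨1, by omega⟩, ⟨0, by omega⟩) (⟨2, by omega⟩, ⟨0, by omega⟩) ≤
      1703 / 2415 :=
    (effRes_iso (gridRevFst 3 n) (⟨1, by omega⟩, ⟨0, by omega⟩)
      (⟨0, by omega⟩, ⟨0, by omega⟩)).trans_le
        (effRes_comm (grid 3 n) _ _ ▸ effRes_grid_three_corner_le hn)
  have h₃ := effRes_grid_three_rung_le hn
  rw [curv_grid_succ_zero_eq 0 le_rfl (by omega)]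
  linarith

theorem le_curv_grid_add_two_zero (k : ℕ) (hk : k + 5 ≤ m) (hn : 3 ≤ n) :
    37 / 1610 ≤ curv (grid m n) (⟨k + 2, by omega⟩, ⟨0, by omega⟩) := by
  have h₁ := effRes_comm (grid m n) _ _ ▸ effRes_grid_side_le k (by omega) hn
  have h₂ := effRes_grid_side_le (k + 1) (by omega) hn
  have h₃ := effRes_grid_rung_le (m := m) (n := n) (k + 1) (by omega) (by omega)
  rw [curv_grid_succ_zero_eq (k + 1) (by omega) (by omega)]
  linarith

theorem le_curv_grid_bottom_of_two_mul_lt (hm : 3 ≤ m) (hn : 3 ≤ n) (hmn : 3 < m ∨ 3 < n)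
    (i : ℕ) (hi : 2 * i < m) : 17 / 4830 ≤ curv (grid m n) (⟨i, by omega⟩, ⟨0, by omega⟩) := by
  match i, hi with
  | 0, _ => exact (le_curv_grid_corner hm hn).trans' (by norm_num)
  | 1, _ =>
    obtain rfl | hm : m = 3 ∨ 4 ≤ m := by omega
    · exact le_curv_grid_three_one_zero (by omega)
    · exact (le_curv_grid_one_zero hm hn).trans' (by norm_num)
  | k + 2, hk => exact (le_curv_grid_add_two_zero k (by omega) hn).trans' (by norm_num)

theorem le_curv_grid_bottom (hm : 3 ≤ m) (hn : 3 ≤ n) (hmn : 3 < m ∨ 3 < n) (i : Fin m) :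
    17 / 4830 ≤ curv (grid m n) (i, ⟨0, by omega⟩) := by
  rcases lt_or_ge (2 * i.val) m with hi | hi
  · exact le_curv_grid_bottom_of_two_mul_lt hm hn hmn i hi
  · have hrev : gridRevFst m n (i.rev, ⟨0, by omega⟩) = (i, ⟨0, by omega⟩) :=
      Prod.ext i.rev_rev rfl
    rw [← hrev, curv_iso]
    exact le_curv_grid_bottom_of_two_mul_lt hm hn hmn i.rev (by rw [Fin.val_rev]; omega)

theorem le_curv_grid_of_snd (hm : 3 ≤ m) (hn : 3 ≤ n) (hmn : 3 < m ∨ 3 < n)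
    (v : Fin m × Fin n) (hv : v.2.val = 0 ∨ v.2.val = n - 1) :
    17 / 4830 ≤ curv (grid m n) v := by
  obtain ⟨i, j, hj⟩ := v
  rcases hv with rfl | hv
  · exact le_curv_grid_bottom hm hn hmn i
  · have hrev : gridRevSnd m n (i, ⟨0, by omega⟩) = (i, ⟨j, hj⟩) :=
      Prod.ext rfl (Fin.ext (show n - (0 + 1) = j by dsimp only at hv; omega))
    rw [← hrev, curv_iso]
    exact le_curv_grid_bottom hm hn hmn i

end GridCurvature

theorem grid_boundary_curv_pos (m n : ℕ) (hm : 3 ≤ m) (hn : 3 ≤ n)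
    (hmn : 3 < m ∨ 3 < n) (v : Fin m × Fin n)
    (hb : v.1.val = 0 ∨ v.1.val = m - 1 ∨ v.2.val = 0 ∨ v.2.val = n - 1) :
    17 / 4830 ≤ curv (grid m n) v ∧ 0 < curv (grid m n) v := by
  have key : 17 / 4830 ≤ curv (grid m n) v := by
    rcases hb with hv | hv | hv
    · exact le_of_le_of_eq (le_curv_grid_of_snd hn hm hmn.symm (v.2, v.1) (.inl hv))
        (curv_iso (gridTranspose n m) (v.2, v.1)).symm
    · exact le_of_le_of_eq (le_curv_grid_of_snd hn hm hmn.symm (v.2, v.1) (.inr hv))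
        (curv_iso (gridTranspose n m) (v.2, v.1)).symm
    · exact le_curv_grid_of_snd hm hn hmn v hv
  exact ⟨key, lt_of_lt_of_le (by norm_num) key⟩
end

section
/- Let α_n be the effective resistance across the first rung of the ladder graph P_2 □ P_n. For 1 < k < n and i ∈ {1,2}, the effective resistance across the (i,k)-th rail of P_2 □ P_n (i.e., between (i,k) and (i,k+1)) equals 1 / (1 + 1/(α_k + α_{n−k} + 1)). -/
open Classical Matrix

/-- The ladder graph `P_2 □ P_n` (vertex `(i,k)` of the paper corresponds to
`(⟨i-1⟩, ⟨k-1⟩) : Fin 2 × Fin n`). -/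
def ladder (n : ℕ) : SimpleGraph (Fin 2 × Fin n) :=
  (SimpleGraph.pathGraph 2).boxProd (SimpleGraph.pathGraph n)

/-- `α_n`, the effective resistance across the first rung of the ladder `P_2 □ P_n`,
i.e. between the vertices `(1,1)` and `(2,1)` of the paper (junk value `0` for `n = 0`). -/
noncomputable def alpha (n : ℕ) : ℝ :=
  if h : 0 < n then effRes (ladder n) (0, ⟨0, h⟩) (1, ⟨0, h⟩) else 0

/-!
The effective resistance between `x` and `y` equals `f x - f y` for any potential `f` with
`L f = e_x - e_y`, and on a connected graph such potentials exist. Cutting the ladder at the rail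
`(i,k)–(i,k+1)` leaves two ladders, `P_2 □ P_k` and `P_2 □ P_{n-k}`, joined by this rail and the
parallel one. Take unit potentials across the first rungs of the two ladders, reflect the first so
that its first rung is the `k`-th one, and glue `β` times it to `-β` times the second, with
`β = 1 / (α_k + α_{n-k} + 2)`. The result is a potential for a unit current across the rail: a
current `β` goes around through the left ladder, the parallel rail and the right ladder, whose
resistances add to `α_k + 1 + α_{n-k}`, and that detour is in parallel with the rail itself.
-/

section PseudoInverse

variable {V : Type*} [Fintype V] [DecidableEq V]

theorem IsMoorePenroseInverse.unique_s11 {L P Q : Matrix V V ℝ} (hP : IsMoorePenroseInverse L P)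
    (hQ : IsMoorePenroseInverse L Q) : P = Q := by
  obtain ⟨hP₁, hP₂, hP₃, hP₄⟩ := hP
  obtain ⟨hQ₁, hQ₂, hQ₃, hQ₄⟩ := hQ
  have hL : L * P = L * Q :=
    calc L * P = (L * Q * L * P)ᵀ := by rw [hQ₁, hP₃]
      _ = (L * P)ᵀ * (L * Q)ᵀ := by rw [← transpose_mul, mul_assoc (L * Q)]
      _ = L * Q := by rw [hP₃, hQ₃, ← mul_assoc, hP₁]
  have hR : P * L = Q * L :=
    calc P * L = (P * (L * Q * L))ᵀ := by rw [hQ₁, hP₄]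
      _ = (Q * L)ᵀ * (P * L)ᵀ := by simp only [← transpose_mul, mul_assoc]
      _ = Q * L := by rw [hP₄, hQ₄, mul_assoc, ← mul_assoc L, hP₁]
  calc P = Q * L * P := by rw [← hR, hP₂]
    _ = Q := by rw [mul_assoc, hL, ← mul_assoc, hQ₂]

theorem isMoorePenroseInverse_diagonal (d : V → ℝ) :
    IsMoorePenroseInverse (diagonal d) (diagonal d⁻¹) := by
  simpa [IsMoorePenroseInverse, diagonal_mul_diagonal] using
    fun v ↦ by simpa only [inv_inv] using mul_inv_mul_cancel (d v)⁻¹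

theorem IsMoorePenroseInverse.conj {L P U : Matrix V V ℝ} (h : IsMoorePenroseInverse L P)
    (hU : Uᵀ * U = 1) : IsMoorePenroseInverse (U * L * Uᵀ) (U * P * Uᵀ) := by
  obtain ⟨h₁, h₂, h₃, h₄⟩ := h
  have hconj : ∀ A B : Matrix V V ℝ, U * A * Uᵀ * (U * B * Uᵀ) = U * (A * B) * Uᵀ := by
    intro A B
    simp only [← mul_assoc, mul_assoc _ Uᵀ U, hU, mul_one]
  refine ⟨?_, ?_, ?_, ?_⟩
  · rw [hconj, hconj, h₁]
  · rw [hconj, hconj, h₂]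
  · rw [hconj, transpose_mul, transpose_mul, transpose_transpose, h₃, ← mul_assoc]
  · rw [hconj, transpose_mul, transpose_mul, transpose_transpose, h₄, ← mul_assoc]

theorem Matrix.IsSymm.exists_isMoorePenroseInverse {L : Matrix V V ℝ} (hL : L.IsSymm) :
    ∃ P, IsMoorePenroseInverse L P := by
  have hH : L.IsHermitian := isHermitian_iff_isSymm.mpr hL
  set U : Matrix V V ℝ := (hH.eigenvectorUnitary : Matrix V V ℝ)
  have hU : Uᵀ * U = 1 := Unitary.coe_star_mul_self hH.eigenvectorUnitary
  have hLU : L = U * diagonal hH.eigenvalues * Uᵀ := by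
    simpa [Unitary.conjStarAlgAut_apply, star_eq_conjTranspose] using hH.spectral_theorem
  exact ⟨_, hLU ▸ (isMoorePenroseInverse_diagonal _).conj hU⟩

theorem IsMoorePenroseInverse.transpose_s11 {L P : Matrix V V ℝ} (h : IsMoorePenroseInverse L P) :
    IsMoorePenroseInverse Lᵀ Pᵀ := by
  obtain ⟨h₁, h₂, h₃, h₄⟩ := h
  refine ⟨?_, ?_, ?_, ?_⟩
  · simp only [← transpose_mul, ← mul_assoc, h₁]
  · simp only [← transpose_mul, ← mul_assoc, h₂]
  · simp only [← transpose_mul, h₄]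
  · simp only [← transpose_mul, h₃]

theorem isMoorePenroseInverse_pinv_s11 {L : Matrix V V ℝ} (hL : L.IsSymm) :
    IsMoorePenroseInverse L (pinv L) := by
  have h := hL.exists_isMoorePenroseInverse
  rw [pinv, dif_pos h]
  exact h.choose_spec

theorem Matrix.IsSymm.pinv {L : Matrix V V ℝ} (hL : L.IsSymm) : (pinv L).IsSymm := by
  have h := (isMoorePenroseInverse_pinv_s11 hL).transpose_s11
  rw [hL.eq] at h
  exact h.unique_s11 (isMoorePenroseInverse_pinv_s11 hL)

end PseudoInverse

section EffectiveResistance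

variable {V : Type*} [Fintype V] [DecidableEq V]

theorem effResM_eq_sub_of_mulVec_eq {L : Matrix V V ℝ} (hL : L.IsSymm) {x y : V} {f : V → ℝ}
    (hf : L *ᵥ f = Pi.single x 1 - Pi.single y 1) : effResM L x y = f x - f y := by
  have hsource : (L *ᵥ f) ⬝ᵥ (pinv L *ᵥ (L *ᵥ f)) = effResM L x y := by
    simp only [hf, effResM, mulVec_sub, mulVec_single_one, dotProduct_sub, sub_dotProduct,
      single_one_dotProduct, col_apply, hL.pinv.apply x y]
    ring
  have hpotential : (L *ᵥ f) ⬝ᵥ (pinv L *ᵥ (L *ᵥ f)) = (L *ᵥ f) ⬝ᵥ f := by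
    have hLf : L *ᵥ f = f ᵥ* L := by rw [← mulVec_transpose, hL.eq]
    nth_rewrite 1 [hLf]
    rw [← dotProduct_mulVec, mulVec_mulVec, mulVec_mulVec, (isMoorePenroseInverse_pinv_s11 hL).1,
      dotProduct_comm]
  rw [← hsource, hpotential, hf]
  simp [sub_dotProduct]

variable {G : SimpleGraph V}

theorem effRes_eq_sub_of_lapMatrix_mulVec_eq {x y : V} {f : V → ℝ}
    (hf : G.lapMatrix ℝ *ᵥ f = Pi.single x 1 - Pi.single y 1) : effRes G x y = f x - f y :=
  effResM_eq_sub_of_mulVec_eq (G.isSymm_lapMatrix ℝ) hf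

theorem SimpleGraph.Connected.exists_lapMatrix_mulVec_eq (hG : G.Connected) (x y : V) :
    ∃ f : V → ℝ, G.lapMatrix ℝ *ᵥ f = Pi.single x 1 - Pi.single y 1 := by
  set L := G.lapMatrix ℝ
  set δ : V → ℝ := Pi.single x 1 - Pi.single y 1
  have hL : L.IsSymm := G.isSymm_lapMatrix ℝ
  obtain ⟨hLPL, -, hLP, -⟩ := isMoorePenroseInverse_pinv_s11 hL
  have hLP_comm : L * pinv L = pinv L * L := by
    rw [← hLP, transpose_mul, hL.eq, hL.pinv.eq]
  -- The defect `δ - L L⁺ δ` lies in `ker L`, so it is constant; it is also orthogonal to itself.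
  refine ⟨pinv L *ᵥ δ, ?_⟩
  set v := δ - L *ᵥ (pinv L *ᵥ δ)
  have hLv : L *ᵥ v = 0 := by
    rw [mulVec_sub, mulVec_mulVec, mulVec_mulVec, mul_assoc, hLP_comm, ← mul_assoc, hLPL,
      sub_self]
  have hv_const : v x = v y :=
    (G.lapMatrix_mulVec_eq_zero_iff_forall_reachable.mp hLv) x y (hG.preconnected x y)
  have hvv : v ⬝ᵥ v = 0 := by
    have hvL : v ⬝ᵥ (L *ᵥ (pinv L *ᵥ δ)) = 0 := by
      rw [dotProduct_mulVec, ← mulVec_transpose, hL.eq, hLv, zero_dotProduct]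
    calc v ⬝ᵥ v = v ⬝ᵥ δ - v ⬝ᵥ (L *ᵥ (pinv L *ᵥ δ)) := dotProduct_sub _ _ _
      _ = 0 := by rw [hvL, sub_zero]; simp [δ, dotProduct_sub, hv_const]
  exact (sub_eq_zero.mp (dotProduct_self_eq_zero.mp hvv)).symm

theorem SimpleGraph.Connected.effRes_nonneg (hG : G.Connected) (x y : V) : 0 ≤ effRes G x y := by
  obtain ⟨f, hf⟩ := hG.exists_lapMatrix_mulVec_eq x y
  have hquad : f x - f y = f ⬝ᵥ (G.lapMatrix ℝ *ᵥ f) := by simp [hf, dotProduct_sub]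
  rw [effRes_eq_sub_of_lapMatrix_mulVec_eq hf, hquad]
  simpa using (G.posSemidef_lapMatrix ℝ).dotProduct_mulVec_nonneg f

end EffectiveResistance

open Finset in
theorem SimpleGraph.lapMatrix_mulVec_apply_eq_sum {V : Type*} [Fintype V] [DecidableEq V]
    (G : SimpleGraph V) (f : V → ℝ) (v : V) :
    (G.lapMatrix ℝ *ᵥ f) v = ∑ u ∈ G.neighborFinset v, (f v - f u) := by
  rw [G.lapMatrix_mulVec_apply, sum_sub_distrib, sum_const, card_neighborFinset_eq_degree,
    nsmul_eq_mul]

open Finset in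
theorem SimpleGraph.sum_neighborFinset_pathGraph {n : ℕ} (c : Fin n) (h : ℕ → ℝ) :
    ∑ b ∈ (pathGraph n).neighborFinset c, h b =
      (if c + 1 < n then h (c + 1) else 0) + (if 0 < (c : ℕ) then h (c - 1) else 0) := by
  have hsplit : ∀ b : Fin n, (if (pathGraph n).Adj c b then h b else 0) =
      (if (b : ℕ) = c + 1 then h b else 0) + (if 0 < (c : ℕ) ∧ (b : ℕ) = c - 1 then h b else 0) := by
    intro b
    rw [pathGraph_adj]
    split_ifs <;> first | omega | simp
  rw [neighborFinset_eq_filter, sum_filter, sum_congr rfl fun b _ ↦ hsplit b, sum_add_distrib,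
    Fin.sum_univ_eq_sum_range (fun b ↦ if b = c + 1 then h b else 0),
    Fin.sum_univ_eq_sum_range (fun b ↦ if 0 < (c : ℕ) ∧ b = c - 1 then h b else 0)]
  congr 1
  · simp
  · by_cases hc : 0 < (c : ℕ)
    · simp [hc]
      omega
    · simp [hc]

-- Columns are indexed by `ℕ` so that potentials on ladders of different lengths can be glued;
-- at a column `c < n` only columns `< n` are read.
def ladderLap (n : ℕ) (g : Fin 2 → ℕ → ℝ) (j : Fin 2) (c : ℕ) : ℝ :=
  (g j c - g (j + 1) c) + (if c + 1 < n then g j c - g j (c + 1) else 0) +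
    (if 0 < c then g j c - g j (c - 1) else 0)

theorem SimpleGraph.neighborFinset_pathGraph_two (j : Fin 2) :
    (SimpleGraph.pathGraph 2).neighborFinset j = {j + 1} := by
  ext b
  fin_cases j <;> fin_cases b <;> simp [SimpleGraph.pathGraph_adj]

open Finset SimpleGraph in
theorem lapMatrix_ladder_mulVec_apply {n : ℕ} (g : Fin 2 → ℕ → ℝ) (j : Fin 2) (c : Fin n) :
    ((ladder n).lapMatrix ℝ *ᵥ fun p ↦ g p.1 p.2) (j, c) = ladderLap n g j c := by
  rw [lapMatrix_mulVec_apply_eq_sum, ladder, neighborFinset_boxProd, sum_disjUnion,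
    sum_product, sum_product, neighborFinset_pathGraph_two, sum_singleton, sum_singleton,
    sum_singleton, sum_neighborFinset_pathGraph c (fun b ↦ g j c - g j b), ladderLap]
  ring

theorem ladder_connected {n : ℕ} (hn : 0 < n) : (ladder n).Connected := by
  obtain ⟨m, rfl⟩ := Nat.exists_eq_add_of_lt hn
  exact (SimpleGraph.pathGraph_connected 1).boxProd (SimpleGraph.pathGraph_connected _)

def IsFirstRungPotential (m : ℕ) (g : Fin 2 → ℕ → ℝ) : Prop :=
  ∀ j c, c < m → ladderLap m g j c = if c = 0 then (if j = 0 then 1 else -1) else 0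

theorem exists_isFirstRungPotential {m : ℕ} (hm : 0 < m) :
    ∃ g, IsFirstRungPotential m g ∧ g 0 0 - g 1 0 = alpha m := by
  obtain ⟨f, hf⟩ := (ladder_connected hm).exists_lapMatrix_mulVec_eq (0, ⟨0, hm⟩) (1, ⟨0, hm⟩)
  set g : Fin 2 → ℕ → ℝ := fun j c ↦ if h : c < m then f (j, ⟨c, h⟩) else 0
  have hfg : (fun p : Fin 2 × Fin m ↦ g p.1 p.2) = f := by
    funext p
    simp [g]
  refine ⟨g, fun j c hc ↦ ?_, ?_⟩
  · have := congrFun hf (j, ⟨c, hc⟩)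
    rw [← hfg, lapMatrix_ladder_mulVec_apply] at this
    rw [this]
    fin_cases j <;> by_cases hc0 : c = 0 <;> simp [hc0, Fin.ext_iff]
  · rw [alpha, dif_pos hm, effRes_eq_sub_of_lapMatrix_mulVec_eq hf]
    simp [g, hm]

theorem ladderLap_comp_add_left (m : ℕ) (U : Fin 2 → ℕ → ℝ) (i j : Fin 2) (c : ℕ) :
    ladderLap m (fun j c ↦ U (j + i) c) j c = ladderLap m U (j + i) c := by
  simp only [ladderLap, add_right_comm j 1 i]

theorem ladderLap_of_reflected {n k c : ℕ} (hc : c < k) (hkn : k < n) {g U : Fin 2 → ℕ → ℝ}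
    {a b : ℝ} (hg : ∀ j c, c < k → g j c = a * U j (k - 1 - c) + b) (j : Fin 2) :
    ladderLap n g j c =
      a * ladderLap k U j (k - 1 - c) + if c + 1 = k then g j c - g j (c + 1) else 0 := by
  have hnext : c + 1 < n := by omega
  simp only [ladderLap, if_pos hnext]
  rw [hg j c hc, hg (j + 1) c hc]
  by_cases hlast : c + 1 = k
  · have hd : k - 1 - c = 0 := by omega
    by_cases hc0 : 0 < c
    · rw [if_pos hlast, if_pos hc0, hg j (c - 1) (by omega), hd, if_pos (by omega),
        show k - 1 - (c - 1) = 0 + 1 by omega]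
      simp only [lt_irrefl, if_false]
      ring
    · rw [if_pos hlast, if_neg hc0, hd, if_neg (by omega)]
      simp only [lt_irrefl, if_false]
      ring
  · rw [if_neg hlast, hg j (c + 1) (by omega), if_pos (show 0 < k - 1 - c by omega),
      show k - 1 - (c + 1) = k - 1 - c - 1 by omega]
    by_cases hc0 : 0 < c
    · rw [if_pos hc0, hg j (c - 1) (by omega), if_pos (by omega),
        show k - 1 - (c - 1) = k - 1 - c + 1 by omega]
      ring
    · rw [if_neg hc0, if_neg (by omega)]
      ring

theorem ladderLap_of_shifted {n k c : ℕ} (hk : 0 < k) (hc : k ≤ c) {g W : Fin 2 → ℕ → ℝ}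
    {a b : ℝ} (hg : ∀ j c, k ≤ c → g j c = a * W j (c - k) + b) (j : Fin 2) :
    ladderLap n g j c =
      a * ladderLap (n - k) W j (c - k) + if c = k then g j c - g j (c - 1) else 0 := by
  simp only [ladderLap, if_pos (show 0 < c by omega)]
  rw [hg j c hc, hg (j + 1) c hc]
  simp only [show c - k + 1 < n - k ↔ c + 1 < n by omega]
  by_cases hfirst : c = k
  · rw [if_pos hfirst, hfirst, Nat.sub_self, if_neg (lt_irrefl 0)]
    by_cases hnext : k + 1 < n
    · rw [if_pos hnext, if_pos hnext, hg j (k + 1) (by omega), Nat.add_sub_cancel_left]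
      ring
    · rw [if_neg hnext, if_neg hnext]
      ring
  · rw [if_neg hfirst, hg j (c - 1) (by omega), if_pos (show 0 < c - k by omega),
      show c - 1 - k = c - k - 1 by omega]
    by_cases hnext : c + 1 < n
    · rw [if_pos hnext, if_pos hnext, hg j (c + 1) (by omega), show c + 1 - k = c - k + 1 by omega]
      ring
    · rw [if_neg hnext, if_neg hnext]
      ring

-- The constant `β * (1 - U 1 0 - W 1 0)` makes the rail parallel to the `i`-th one carry the
-- current `β`.
noncomputable def railPotential (k : ℕ) (i : Fin 2) (β : ℝ) (U W : Fin 2 → ℕ → ℝ) :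
    Fin 2 → ℕ → ℝ :=
  fun j c ↦ if c < k then β * U (j + i) (k - 1 - c) + β * (1 - U 1 0 - W 1 0)
    else -β * W (j + i) (c - k)

theorem ladderLap_railPotential {n k : ℕ} (hk : 0 < k) (hkn : k < n) (i : Fin 2) {β : ℝ}
    {U W : Fin 2 → ℕ → ℝ} (hU : IsFirstRungPotential k U) (hW : IsFirstRungPotential (n - k) W)
    (hβ : β * (U 0 0 - U 1 0 + (W 0 0 - W 1 0) + 2) = 1) (j : Fin 2) {c : ℕ} (hc : c < n) :
    ladderLap n (railPotential k i β U W) j c =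
      (if j = i ∧ c = k - 1 then 1 else 0) - (if j = i ∧ c = k then 1 else 0) := by
  set F := railPotential k i β U W
  have hleft : ∀ j c, c < k →
      F j c = β * (fun j c ↦ U (j + i) c) j (k - 1 - c) + β * (1 - U 1 0 - W 1 0) :=
    fun j c hc ↦ if_pos hc
  have hright : ∀ j c, k ≤ c → F j c = -β * (fun j c ↦ W (j + i) c) j (c - k) + 0 :=
    fun j c hc ↦ by simp [F, railPotential, Nat.not_lt.mpr hc]
  rcases lt_or_ge c k with hck | hkc
  · rw [ladderLap_of_reflected hck hkn hleft, ladderLap_comp_add_left, hU _ _ (by omega)]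
    by_cases hlast : c + 1 = k
    · rw [if_pos hlast, hleft j c hck, hright j (c + 1) hlast.ge, show k - 1 - c = 0 by omega,
        show c + 1 - k = 0 by omega]
      subst hlast
      fin_cases i <;> fin_cases j <;> simp <;> first | ring1 | linear_combination hβ
    · rw [if_neg hlast, if_neg (show k - 1 - c ≠ 0 by omega), if_neg (by omega),
        if_neg (by omega)]
      ring
  · rw [ladderLap_of_shifted hk hkc hright, ladderLap_comp_add_left, hW _ _ (by omega)]
    by_cases hfirst : c = k
    · subst hfirst
      rw [if_pos rfl, hright j c le_rfl, hleft j (c - 1) (by omega), Nat.sub_self,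
        show c - 1 - (c - 1) = 0 by omega]
      fin_cases i <;> fin_cases j <;> simp [show c ≠ c - 1 by omega] <;>
        first | ring1 | linear_combination -hβ
    · rw [if_neg hfirst, if_neg (show c - k ≠ 0 by omega), if_neg (by omega),
        if_neg (by omega)]
      ring

theorem alpha_nonneg (m : ℕ) : 0 ≤ alpha m := by
  unfold alpha
  split_ifs with hm
  exacts [(ladder_connected hm).effRes_nonneg _ _, le_rfl]

theorem mid_rail_effres (n k : ℕ) (hk1 : 1 < k) (hkn : k < n) (i : Fin 2) :
    effRes (ladder n) (i, ⟨k - 1, by omega⟩) (i, ⟨k, by omega⟩)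
      = 1 / (1 + 1 / (alpha k + alpha (n - k) + 1)) := by
  obtain ⟨U, hU, hαU⟩ := exists_isFirstRungPotential (show 0 < k by omega)
  obtain ⟨W, hW, hαW⟩ := exists_isFirstRungPotential (show 0 < n - k by omega)
  have hS : 0 < alpha k + alpha (n - k) + 1 := by linarith [alpha_nonneg k, alpha_nonneg (n - k)]
  set β := (alpha k + alpha (n - k) + 2)⁻¹
  have hβ : β * (U 0 0 - U 1 0 + (W 0 0 - W 1 0) + 2) = 1 := by
    rw [hαU, hαW]
    exact inv_mul_cancel₀ (by linarith)
  have hF : (ladder n).lapMatrix ℝ *ᵥ (fun p ↦ railPotential k i β U W p.1 p.2) =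
      Pi.single (i, ⟨k - 1, by omega⟩) 1 - Pi.single (i, ⟨k, by omega⟩) 1 := by
    funext ⟨j, c⟩
    rw [lapMatrix_ladder_mulVec_apply, ladderLap_railPotential (by omega) hkn i hU hW hβ j c.isLt]
    simp [Pi.single_apply, Prod.ext_iff, Fin.ext_iff]
  rw [effRes_eq_sub_of_lapMatrix_mulVec_eq hF]
  have hii : i + i = 0 := by fin_cases i <;> rfl
  simp only [railPotential, if_pos (show k - 1 < k by omega), if_neg (lt_irrefl k), Nat.sub_self,
    hii]
  rw [one_add_div hS.ne', one_div_div, eq_div_iff (by linarith)]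
  linear_combination (U 0 0 - U 1 0 + W 0 0 - W 1 0 + 1) * hβ +
    (1 - β * (U 0 0 - U 1 0 + W 0 0 - W 1 0 + 1)) * (hαU + hαW)
end
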